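/- Let γ ∈ S_{2p} act on labels {1ᵀ,…,pᵀ, 1ᴮ,…,pᴮ} by γ(iᵀ) = (i−1)ᵀ and γ(iᴮ) = (i+1)ᴮ (indices mod p), and for 1 ≤ i ≤ p let τ_i be the transposition (iᵀ, (i−1)ᴮ) (indices mod p). Then for any nonempty subset A ⊆ {1,…,p}, the permutation α = γ · ∏_{i∈A} τ_i satisfies |α| = 2p − |A|, while for A = ∅ one has |α| = |γ| = 2p − 2. -/

import Mathlib

def permLength {α : Type*} [Fintype α] [DecidableEq α] (π : Equiv.Perm α) : ℕ :=
  π.cycleType.sum - Multiset.card π.cycleType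

/-- The permutation `γ ∈ S_{2p}` with `γ(iᵀ) = (i-1)ᵀ` and `γ(iᴮ) = (i+1)ᴮ`
(indices mod `p`), the top copy being `Sum.inl` and the bottom copy `Sum.inr`. -/
def gammaPerm (p : ℕ) [NeZero p] : Equiv.Perm (Fin p ⊕ Fin p) :=
  Equiv.sumCongr (Equiv.subRight (1 : Fin p)) (Equiv.addRight (1 : Fin p))

/-- The transposition `τ_i = (iᵀ, (i-1)ᴮ)`. -/
def tauSwap (p : ℕ) [NeZero p] (i : Fin p) : Equiv.Perm (Fin p ⊕ Fin p) :=
  Equiv.swap (Sum.inl i) (Sum.inr (i - 1))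

open Equiv Equiv.Perm
open Fin.NatCast Fin.CommRing

/-- Generic orbit-counting lemma: if `π` is fixed-point-free and `f` classifies the
cycles of `π` (with section `rep`), then `permLength π = |β| - |S|`. -/
theorem permLength_eq_card_sub {β S : Type*} [Fintype β] [DecidableEq β] [Fintype S]
    [DecidableEq S]
    (π : Equiv.Perm β) (hfix : ∀ x, π x ≠ x) (f : β → S) (rep : S → β)
    (hrep : ∀ s, f (rep s) = s) (hinv : ∀ x, f (π x) = f x)
    (hsc : ∀ x, π.SameCycle x (rep (f x))) :
    permLength π = Fintype.card β - Fintype.card S := by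
  classical
  have hpowgen : ∀ (σ : Equiv.Perm β), (∀ x, f (σ x) = f x) →
      ∀ (n : ℕ) (x), f ((σ ^ n) x) = f x := by
    intro σ hσ n
    induction n with
    | zero => simp
    | succ n ih => intro x; rw [pow_succ, Equiv.Perm.mul_apply, ih, hσ]
  have hinv' : ∀ x, f (π⁻¹ x) = f x := by
    intro x
    conv_rhs => rw [← (by simp : π (π⁻¹ x) = x), hinv]
  have hsame : ∀ x y, π.SameCycle x y → f x = f y := by
    rintro x y ⟨k, rfl⟩
    rcases k with n | n
    · rw [Int.ofNat_eq_natCast, zpow_natCast, hpowgen π hinv]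
    · rw [zpow_negSucc, ← inv_pow, hpowgen π⁻¹ hinv']
  have hsupp : π.support = Finset.univ := by
    rw [Finset.eq_univ_iff_forall]; intro x; rw [Equiv.Perm.mem_support]; exact hfix x
  have hcard1 : π.cycleType.sum = Fintype.card β := by
    rw [Equiv.Perm.sum_cycleType, hsupp, Finset.card_univ]
  have hcard2 : Multiset.card π.cycleType = Fintype.card S := by
    rw [Equiv.Perm.cycleType_def, Multiset.card_map, ← Finset.card_def]
    have himg : π.cycleFactorsFinset = Finset.image (fun s => π.cycleOf (rep s)) Finset.univ := by
      ext c
      simp only [Finset.mem_image, Finset.mem_univ, true_and]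
      constructor
      · intro hc
        obtain ⟨x, hx⟩ := (Equiv.Perm.mem_cycleFactorsFinset_iff.mp hc).1.nonempty_support
        refine ⟨f x, ?_⟩
        rw [← (hsc x).cycleOf_eq, ← Equiv.Perm.cycle_is_cycleOf hx hc]
      · rintro ⟨s, rfl⟩
        rw [Equiv.Perm.cycleOf_mem_cycleFactorsFinset_iff, Equiv.Perm.mem_support]
        exact hfix _
    rw [himg, Finset.card_image_of_injective _ ?_, Finset.card_univ]
    intro s t hst
    have hts : (rep t) ∈ (π.cycleOf (rep s)).support := by
      simp only at hst
      rw [hst, Equiv.Perm.mem_support_cycleOf_iff]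
      exact ⟨Equiv.Perm.SameCycle.refl _ _, Equiv.Perm.mem_support.mpr (hfix _)⟩
    rw [Equiv.Perm.mem_support_cycleOf_iff] at hts
    have := hsame _ _ hts.1
    rwa [hrep, hrep] at this
  rw [permLength, hcard1, hcard2]

namespace GammaAux

variable {p : ℕ} [NeZero p]

theorem fin_val_eq_zero_iff {x : Fin p} : x.val = 0 ↔ x = 0 := by
  rw [Fin.ext_iff, Fin.val_zero]

theorem fin_sub_one_val {x : Fin p} (h : x ≠ 0) : (x - 1).val = x.val - 1 := by
  rcases p with _ | n
  · exact absurd rfl (NeZero.ne 0)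
  · rw [Fin.coe_sub_one, if_neg h]

variable (A : Finset (Fin p))

/-- The cyclic distance from `i` back to the nearest element of `A`. -/
def minDist (hA : A.Nonempty) (i : Fin p) : ℕ :=
  (A.image fun a => (i - a).val).min' (hA.image _)

theorem minDist_le (hA : A.Nonempty) {a : Fin p} (ha : a ∈ A) (i : Fin p) :
    minDist A hA i ≤ (i - a).val :=
  Finset.min'_le _ _ (Finset.mem_image_of_mem _ ha)

theorem exists_minDist (hA : A.Nonempty) (i : Fin p) :
    ∃ a ∈ A, (i - a).val = minDist A hA i := by
  obtain ⟨a, ha, h⟩ := Finset.mem_image.mp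
    (Finset.min'_mem (A.image fun a => (i - a).val) (hA.image _))
  exact ⟨a, ha, h⟩

/-- The nearest element of `A` cyclically at or before `i`. -/
def prevA (hA : A.Nonempty) (i : Fin p) : Fin p :=
  i - (minDist A hA i : Fin p)

theorem prevA_mem (hA : A.Nonempty) (i : Fin p) : prevA A hA i ∈ A := by
  obtain ⟨a, ha, h⟩ := exists_minDist A hA i
  rw [prevA, ← h, Fin.cast_val_eq_self, sub_sub_cancel]
  exact ha

theorem minDist_eq_zero_iff (hA : A.Nonempty) {i : Fin p} :
    minDist A hA i = 0 ↔ i ∈ A := by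
  constructor
  · intro h
    obtain ⟨a, ha, hd⟩ := exists_minDist A hA i
    rw [h, fin_val_eq_zero_iff, sub_eq_zero] at hd
    rwa [hd]
  · intro h
    have := minDist_le A hA h i
    simpa using this

theorem prevA_of_mem (hA : A.Nonempty) {i : Fin p} (hi : i ∈ A) : prevA A hA i = i := by
  rw [prevA, (minDist_eq_zero_iff A hA).mpr hi]
  simp

theorem minDist_step (hA : A.Nonempty) {i : Fin p} (hi : i ∉ A) :
    minDist A hA (i - 1) = minDist A hA i - 1 := by
  have key : ∀ a ∈ A, (i - 1 - a).val = (i - a).val - 1 := by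
    intro a ha
    have hne : i - a ≠ 0 := sub_ne_zero.mpr (fun h => hi (h ▸ ha))
    rw [sub_right_comm, fin_sub_one_val hne]
  apply le_antisymm
  · obtain ⟨a, ha, h⟩ := exists_minDist A hA i
    calc minDist A hA (i - 1) ≤ (i - 1 - a).val := minDist_le A hA ha _
    _ = (i - a).val - 1 := key a ha
    _ = minDist A hA i - 1 := by rw [h]
  · apply Finset.le_min'
    intro v hv
    obtain ⟨a, ha, rfl⟩ := Finset.mem_image.mp hv
    rw [key a ha]
    exact Nat.sub_le_sub_right (minDist_le A hA ha i) 1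

theorem prevA_step (hA : A.Nonempty) {i : Fin p} (hi : i ∉ A) :
    prevA A hA (i - 1) = prevA A hA i := by
  have h1 : 1 ≤ minDist A hA i := by
    rcases Nat.eq_zero_or_pos (minDist A hA i) with h | h
    · exact absurd ((minDist_eq_zero_iff A hA).mp h) hi
    · exact h
  rw [prevA, prevA, minDist_step A hA hi, Nat.cast_sub h1, Nat.cast_one]
  ring

theorem mem_of_one_eq_zero {A : Finset (Fin p)} (hA : A.Nonempty)
    (hp : p = 1) (i : Fin p) : i ∈ A := by
  obtain ⟨a, ha⟩ := hA
  have hia : i = a := by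
    apply Fin.ext
    have h1 := i.isLt
    have h2 := a.isLt
    omega
  rwa [hia]

theorem tauProd_inl (A : Finset (Fin p))
    (hc : (↑A : Set (Fin p)).Pairwise (Function.onFun Commute (tauSwap p))) (i : Fin p) :
    A.noncommProd (tauSwap p) hc (Sum.inl i) =
      if i ∈ A then Sum.inr (i - 1) else Sum.inl i := by
  revert hc
  induction A using Finset.cons_induction with
  | empty => intro hc; simp
  | cons a s ha ih =>
    intro hc
    rw [Finset.noncommProd_cons, Equiv.Perm.mul_apply, ih]
    by_cases hi : i ∈ s
    · have hia : i ≠ a := fun h => ha (h ▸ hi)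
      rw [if_pos hi, if_pos (Finset.mem_cons.mpr (Or.inr hi)), tauSwap,
        Equiv.swap_apply_of_ne_of_ne (by simp) (by simp [sub_left_inj, hia])]
    · rw [if_neg hi]
      by_cases hia : i = a
      · subst hia
        rw [tauSwap, Equiv.swap_apply_left, if_pos (Finset.mem_cons_self _ _)]
      · rw [tauSwap, Equiv.swap_apply_of_ne_of_ne (by simp [hia]) (by simp),
          if_neg (by simp [Finset.mem_cons, hia, hi])]

theorem tauProd_inr (A : Finset (Fin p))
    (hc : (↑A : Set (Fin p)).Pairwise (Function.onFun Commute (tauSwap p))) (j : Fin p) :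
    A.noncommProd (tauSwap p) hc (Sum.inr j) =
      if j + 1 ∈ A then Sum.inl (j + 1) else Sum.inr j := by
  revert hc
  induction A using Finset.cons_induction with
  | empty => intro hc; simp
  | cons a s ha ih =>
    intro hc
    rw [Finset.noncommProd_cons, Equiv.Perm.mul_apply, ih]
    by_cases hj : j + 1 ∈ s
    · have hja : j + 1 ≠ a := fun h => ha (h ▸ hj)
      rw [if_pos hj, if_pos (Finset.mem_cons.mpr (Or.inr hj)), tauSwap,
        Equiv.swap_apply_of_ne_of_ne (by simp [hja]) (by simp)]
    · rw [if_neg hj]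
      by_cases hja : j + 1 = a
      · have hj' : j = a - 1 := by rw [← hja]; ring
        subst hj'
        rw [tauSwap, Equiv.swap_apply_right, hja, if_pos (Finset.mem_cons_self _ _)]
      · have hj' : j ≠ a - 1 := fun h => hja (by rw [h]; ring)
        rw [tauSwap, Equiv.swap_apply_of_ne_of_ne (by simp) (by simp [hj']),
          if_neg (by simp [Finset.mem_cons, hja, hj])]

theorem alpha_inl (A : Finset (Fin p))
    (hc : (↑A : Set (Fin p)).Pairwise (Function.onFun Commute (tauSwap p))) (i : Fin p) :
    (gammaPerm p * A.noncommProd (tauSwap p) hc) (Sum.inl i) =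
      if i ∈ A then Sum.inr i else Sum.inl (i - 1) := by
  rw [Equiv.Perm.mul_apply, tauProd_inl]
  split_ifs with h
  · simp [gammaPerm, sub_add_cancel]
  · simp [gammaPerm]

theorem alpha_inr (A : Finset (Fin p))
    (hc : (↑A : Set (Fin p)).Pairwise (Function.onFun Commute (tauSwap p))) (j : Fin p) :
    (gammaPerm p * A.noncommProd (tauSwap p) hc) (Sum.inr j) =
      if j + 1 ∈ A then Sum.inl j else Sum.inr (j + 1) := by
  rw [Equiv.Perm.mul_apply, tauProd_inr]
  split_ifs with h
  · simp [gammaPerm, add_sub_cancel_right]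
  · simp [gammaPerm]

theorem alpha_pow_inl (A : Finset (Fin p))
    (hc : (↑A : Set (Fin p)).Pairwise (Function.onFun Commute (tauSwap p)))
    (hA : A.Nonempty) :
    ∀ (n : ℕ) (i : Fin p), minDist A hA i = n →
      ((gammaPerm p * A.noncommProd (tauSwap p) hc) ^ n) (Sum.inl i) =
        Sum.inl (prevA A hA i) := by
  intro n
  induction n with
  | zero =>
    intro i h
    rw [pow_zero]
    have : prevA A hA i = i := by rw [prevA, h]; simp
    rw [this]; rfl
  | succ n ih =>
    intro i h
    have hi : i ∉ A := by
      intro hi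
      rw [(minDist_eq_zero_iff A hA).mpr hi] at h
      exact Nat.succ_ne_zero n h.symm
    have hstep : minDist A hA (i - 1) = n := by rw [minDist_step A hA hi, h]; omega
    rw [pow_succ, Equiv.Perm.mul_apply, alpha_inl, if_neg hi, ih _ hstep,
      prevA_step A hA hi]

theorem alpha_pow_inr (A : Finset (Fin p))
    (hc : (↑A : Set (Fin p)).Pairwise (Function.onFun Commute (tauSwap p)))
    (hA : A.Nonempty) :
    ∀ (n : ℕ) (j : Fin p), minDist A hA j = n →
      ((gammaPerm p * A.noncommProd (tauSwap p) hc) ^ (n + 1)) (Sum.inl (prevA A hA j)) =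
        Sum.inr j := by
  intro n
  induction n with
  | zero =>
    intro j h
    have hj : j ∈ A := (minDist_eq_zero_iff A hA).mp h
    rw [pow_one, prevA_of_mem A hA hj, alpha_inl, if_pos hj]
  | succ n ih =>
    intro j h
    have hj : j ∉ A := by
      intro hj
      rw [(minDist_eq_zero_iff A hA).mpr hj] at h
      exact Nat.succ_ne_zero n h.symm
    have hstep : minDist A hA (j - 1) = n := by rw [minDist_step A hA hj, h]; omega
    have := ih (j - 1) hstep
    rw [prevA_step A hA hj] at this
    rw [pow_succ', Equiv.Perm.mul_apply, this, alpha_inr, sub_add_cancel, if_neg hj]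

end GammaAux

open GammaAux in
/-- For nonempty `A ⊆ {1,…,p}`, the permutation `α = γ ∏_{i∈A} τ_i` has length
`2p - |A|`; for `A = ∅`, `|α| = |γ| = 2p - 2`. -/
theorem length_gamma_mul_swaps (p : ℕ) [NeZero p] (A : Finset (Fin p))
    (hc : (↑A : Set (Fin p)).Pairwise (Function.onFun Commute (tauSwap p))) :
    permLength (gammaPerm p * A.noncommProd (tauSwap p) hc) =
      if A.Nonempty then 2 * p - A.card else 2 * p - 2 := by
  classical
  have hcardβ : Fintype.card (Fin p ⊕ Fin p) = 2 * p := by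
    simp [Fintype.card_sum]; ring
  have hg_inl : ∀ i : Fin p, gammaPerm p (Sum.inl i) = Sum.inl (i - 1) := by
    intro i; simp [gammaPerm]
  have hg_inr : ∀ j : Fin p, gammaPerm p (Sum.inr j) = Sum.inr (j + 1) := by
    intro j; simp [gammaPerm]
  by_cases hA : A.Nonempty
  · rw [if_pos hA]
    refine Eq.trans (permLength_eq_card_sub _ ?_
      (fun x => (⟨prevA A hA (Sum.elim id id x), prevA_mem A hA _⟩ : {a : Fin p // a ∈ A}))
      (fun s => Sum.inl s.1) ?_ ?_ ?_) ?_
    · -- fixed point free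
      rintro (i | j) hx
      · rw [alpha_inl] at hx
        split_ifs at hx with h
        · have heq : i - 1 = i := Sum.inl.inj hx
          have h10 : (1 : Fin p) = 0 := by
            have := sub_eq_iff_eq_add.mp heq
            rwa [left_eq_add] at this
          have hp : p = 1 := by
            have h' := congrArg Fin.val h10
            rw [Fin.val_one' p, Fin.val_zero] at h'
            exact Nat.dvd_one.mp (Nat.dvd_of_mod_eq_zero h')
          exact h (mem_of_one_eq_zero hA hp i)
      · rw [alpha_inr] at hx
        split_ifs at hx with h
        · have heq : j + 1 = j := Sum.inr.inj hx
          have h10 : (1 : Fin p) = 0 := by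
            have : j + 1 = j + 0 := by rw [add_zero]; exact heq
            exact add_left_cancel this
          have hp : p = 1 := by
            have h' := congrArg Fin.val h10
            rw [Fin.val_one' p, Fin.val_zero] at h'
            exact Nat.dvd_one.mp (Nat.dvd_of_mod_eq_zero h')
          exact h (mem_of_one_eq_zero hA hp (j + 1))
    · -- hrep
      intro s
      exact Subtype.ext (prevA_of_mem A hA s.2)
    · -- hinv
      rintro (i | j)
      · by_cases h : i ∈ A
        · rw [alpha_inl, if_pos h]; rfl
        · rw [alpha_inl, if_neg h]
          exact Subtype.ext (prevA_step A hA h)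
      · by_cases h : j + 1 ∈ A
        · rw [alpha_inr, if_pos h]; rfl
        · rw [alpha_inr, if_neg h]
          apply Subtype.ext
          have := prevA_step A hA h
          rw [add_sub_cancel_right] at this
          exact this.symm
    · -- hsc
      rintro (i | j)
      · exact ⟨((minDist A hA i : ℕ) : ℤ), by
          rw [zpow_natCast]; exact alpha_pow_inl A hc hA _ i rfl⟩
      · refine Equiv.Perm.SameCycle.symm ?_
        exact ⟨((minDist A hA j + 1 : ℕ) : ℤ), by
          rw [zpow_natCast]; exact alpha_pow_inr A hc hA _ j rfl⟩
    · rw [hcardβ, Fintype.card_coe]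
  · rw [if_neg hA]
    rw [Finset.not_nonempty_iff_eq_empty] at hA
    subst hA
    rw [Finset.noncommProd_empty, mul_one]
    by_cases hp1 : p = 1
    · subst hp1
      have hg1 : gammaPerm 1 = 1 := by
        apply Equiv.ext
        rintro (i | j)
        · rw [hg_inl]; exact congrArg Sum.inl (Subsingleton.elim _ _)
        · rw [hg_inr]; exact congrArg Sum.inr (Subsingleton.elim _ _)
      rw [hg1]
      simp [permLength, Equiv.Perm.cycleType_one]
    · -- p ≥ 2
      have hp2 : 2 ≤ p := by
        have := NeZero.ne p; omega
      have h10 : (1 : Fin p) ≠ 0 := by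
        intro h
        have h' := congrArg Fin.val h
        rw [Fin.val_one' p, Fin.val_zero, Nat.mod_eq_of_lt hp2] at h'
        omega
      have hpow_inl : ∀ (n : ℕ) (i : Fin p),
          (gammaPerm p ^ n) (Sum.inl i) = Sum.inl (i - (n : Fin p)) := by
        intro n
        induction n with
        | zero => intro i; simp
        | succ n ih =>
          intro i
          rw [pow_succ, Equiv.Perm.mul_apply, hg_inl, ih]
          congr 1
          push_cast
          ring
      have hpow_inr : ∀ (n : ℕ) (j : Fin p),
          (gammaPerm p ^ n) (Sum.inr j) = Sum.inr (j + (n : Fin p)) := by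
        intro n
        induction n with
        | zero => intro j; simp
        | succ n ih =>
          intro j
          rw [pow_succ, Equiv.Perm.mul_apply, hg_inr, ih]
          congr 1
          push_cast
          ring
      refine Eq.trans (permLength_eq_card_sub (gammaPerm p) ?_
        (fun x => Sum.isLeft x)
        (fun b => if b then Sum.inl 0 else Sum.inr 0) ?_ ?_ ?_) ?_
      · rintro (i | j) hx
        · rw [hg_inl] at hx
          exact h10 (sub_eq_self.mp (Sum.inl.inj hx))
        · rw [hg_inr] at hx
          exact h10 (add_eq_left.mp (Sum.inr.inj hx))
      · rintro (_ | _) <;> rfl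
      · rintro (i | j)
        · rw [hg_inl]; rfl
        · rw [hg_inr]; rfl
      · rintro (i | j)
        · exact ⟨((i.val : ℕ) : ℤ), by
            rw [zpow_natCast, hpow_inl]
            simp⟩
        · refine Equiv.Perm.SameCycle.symm ⟨((j.val : ℕ) : ℤ), ?_⟩
          show (gammaPerm p ^ ((j.val : ℕ) : ℤ)) (Sum.inr 0) = Sum.inr j
          rw [zpow_natCast, hpow_inr]
          simp
      · rw [hcardβ, Fintype.card_bool]
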